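/- arXiv:1410.4488 — 2 statements merged into one kernel-verified Lean document; each statement's English description precedes it below -/
import Mathlib

section
/- Let A = (Q, Σ, δ, ρ) be a connected invertible reversible Mealy automaton that is not bireversible (equivalently, not coreversible). Let m ≥ 1, let T be a connected component of A^m and let L be a connected component of A^{m+1}, and assume that every word of L has its length-m suffix in T. Then |L| > |T|. (Equivalently: a 1-self-liftable path in the labeled orbit tree of A cannot contain an edge labeled by 1.) -/
/-!
Mealy automata: common definitions.

A Mealy automaton on stateset `Q` and alphabet `Γ` is given by transition
functions `δ : Γ → Q → Q` (for each input letter) and output functions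
`ρ : Q → Γ → Γ` (for each state); it has a transition `x —i|j→ y` exactly
when `δ i x = y` and `ρ x i = j`.
-/

/-- Extended output function `ρ_x : Γ* → Γ*` of a single state. -/
def rhoStar {Q Γ : Type*} (δ : Γ → Q → Q) (ρ : Q → Γ → Γ) : Q → List Γ → List Γ
  | _, [] => []
  | x, i :: s => ρ x i :: rhoStar δ ρ (δ i x) s

/-- `ρ_u : Γ* → Γ*` for a word `u = x₁⋯x_n` of states: `ρ_u = ρ_{x_n} ∘ ⋯ ∘ ρ_{x₁}`. -/
def rhoWord {Q Γ : Type*} (δ : Γ → Q → Q) (ρ : Q → Γ → Γ) : List Q → List Γ → List Γ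
  | [], s => s
  | x :: u, s => rhoWord δ ρ u (rhoStar δ ρ x s)

/-- `ρ_u : Γ → Γ` on single letters (the output function of the power automaton). -/
def rhoLetter {Q Γ : Type*} (ρ : Q → Γ → Γ) : List Q → Γ → Γ
  | [], i => i
  | x :: u, i => rhoLetter ρ u (ρ x i)

/-- Extended transition function `δ_i : Q* → Q*` (the transition function of powers). -/
def deltaStar {Q Γ : Type*} (δ : Γ → Q → Q) (ρ : Q → Γ → Γ) : Γ → List Q → List Q
  | _, [] => []
  | i, x :: u => δ i x :: deltaStar δ ρ (ρ x i) u

/-- Sequential application `δ_s = δ_{s_n} ∘ ⋯ ∘ δ_{s₁}` of the letters of a word `s`. -/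
def applyWord {S Γ : Type*} (d : Γ → S → S) : List Γ → S → S
  | [], x => x
  | i :: s, x => applyWord d s (d i x)

/-- The orbit `{δ_s(x) : s ∈ Γ*}` of a state: for reversible automata this is
exactly the (strongly) connected component of `x`. -/
def orbitOf {S Γ : Type*} (d : Γ → S → S) (x : S) : Set S :=
  {y | ∃ s : List Γ, applyWord d s x = y}

/-- An automaton is invertible when every output function is a permutation. -/
def MInvertible {Q Γ : Type*} (ρ : Q → Γ → Γ) : Prop := ∀ x, Function.Bijective (ρ x)

/-- An automaton is reversible when every transition function is a permutation. -/
def MReversible {Q Γ : Type*} (δ : Γ → Q → Q) : Prop := ∀ i, Function.Bijective (δ i)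

/-- Coreversibility: `δ_i(y) = δ_{i'}(z)` and `ρ_y(i) = ρ_z(i')` imply `y = z`. -/
def MCoreversible {Q Γ : Type*} (δ : Γ → Q → Q) (ρ : Q → Γ → Γ) : Prop :=
  ∀ y z : Q, ∀ i i' : Γ, δ i y = δ i' z → ρ y i = ρ z i' → y = z

/-- Bireversible: invertible, reversible and coreversible. -/
def MBireversible {Q Γ : Type*} (δ : Γ → Q → Q) (ρ : Q → Γ → Γ) : Prop :=
  MInvertible ρ ∧ MReversible δ ∧ MCoreversible δ ρ

/-- Connectedness: every state is reachable from every state. -/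
def MConnected {Q Γ : Type*} (δ : Γ → Q → Q) : Prop :=
  ∀ x y : Q, ∃ s : List Γ, applyWord δ s x = y

/-- Invertibility of a component `C` (as an automaton with stateset `C`). -/
def CompInvertible {S Γ : Type*} (r : S → Γ → Γ) (C : Set S) : Prop :=
  ∀ x ∈ C, Function.Bijective (r x)

/-- Reversibility of a component `C`: each transition function permutes `C`. -/
def CompReversible {S Γ : Type*} (d : Γ → S → S) (C : Set S) : Prop :=
  ∀ i : Γ, Set.BijOn (d i) C C

/-- Coreversibility of a component `C` (as an automaton with stateset `C`). -/
def CompCoreversible {S Γ : Type*} (d : Γ → S → S) (r : S → Γ → Γ) (C : Set S) : Prop :=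
  ∀ y ∈ C, ∀ z ∈ C, ∀ i i' : Γ, d i y = d i' z → r y i = r z i' → y = z

/-- Bireversibility of a component `C` (as an automaton with stateset `C`). -/
def CompBireversible {S Γ : Type*} (d : Γ → S → S) (r : S → Γ → Γ) (C : Set S) : Prop :=
  CompInvertible r C ∧ CompReversible d C ∧ CompCoreversible d r C

/-- Transition functions of the product `A × B` of two Mealy automata. -/
def prodD {Q Q' Γ : Type*} (δ : Γ → Q → Q) (ρ : Q → Γ → Γ) (δ' : Γ → Q' → Q') :
    Γ → Q × Q' → Q × Q' :=
  fun i p => (δ i p.1, δ' (ρ p.1 i) p.2)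

/-- Output functions of the product `A × B` of two Mealy automata. -/
def prodR {Q Q' Γ : Type*} (ρ : Q → Γ → Γ) (ρ' : Q' → Γ → Γ) : Q × Q' → Γ → Γ :=
  fun p i => ρ' p.2 (ρ p.1 i)

/-- `u^n`: the `n`-fold concatenation of a word with itself. -/
def wordPow {Q : Type*} (u : List Q) : ℕ → List Q
  | 0 => []
  | n + 1 => u ++ wordPow u n

/-!
Write `L` for the component of `v0 = x :: u` and `T` for that of `u0`. Dropping the first
letter maps `L` onto the component of `u` (onto because the output functions are
permutations), and `u ∈ T`, so `|T| ≤ |L|`. If equality held, dropping the first letter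
would be injective on `L`. Then for every state `w` and letter `j`: pick `w :: u' ∈ L`
(connectedness), a predecessor `t` of `u'` under `δ_j` in `T` (reversibility), a lift
`b :: t ∈ L` and a letter `i` with `ρ_b(i) = j`; the words `δ_i(b :: t) = δ_i(b) :: u'` and
`w :: u'` of `L` share their tail, so `δ_i(b) = w`. Hence every `(w, j)` is the end of a
transition, so by finiteness transitions are determined by their ends: `A` is coreversible.
-/

open Function Set

section Orbit

variable {S Γ : Type*} {d : Γ → S → S} {x y : S}

theorem applyWord_append (s s' : List Γ) (x : S) :
    applyWord d (s ++ s') x = applyWord d s' (applyWord d s x) := by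
  induction s generalizing x with
  | nil => rfl
  | cons i s ih => exact ih _

theorem mem_orbitOf_self (x : S) : x ∈ orbitOf d x := ⟨[], rfl⟩

theorem mem_orbitOf_trans {z : S} (hy : y ∈ orbitOf d x) (hz : z ∈ orbitOf d y) :
    z ∈ orbitOf d x := by
  obtain ⟨s, rfl⟩ := hy
  obtain ⟨s', rfl⟩ := hz
  exact ⟨s ++ s', applyWord_append s s' x⟩

theorem apply_mem_orbitOf (hy : y ∈ orbitOf d x) (i : Γ) : d i y ∈ orbitOf d x :=
  mem_orbitOf_trans hy ⟨[i], rfl⟩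

theorem iterate_mem_orbitOf (hy : y ∈ orbitOf d x) (i : Γ) (n : ℕ) :
    (d i)^[n] y ∈ orbitOf d x := by
  induction n with
  | zero => exact hy
  | succ n ih => rw [iterate_succ_apply']; exact apply_mem_orbitOf ih i

theorem exists_mem_orbitOf_apply_eq (hper : ∀ i (z : S), z ∈ periodicPts (d i))
    (hy : y ∈ orbitOf d x) (j : Γ) : ∃ y' ∈ orbitOf d x, d j y' = y := by
  obtain ⟨n, hn, hny⟩ := mem_periodicPts.1 (hper j y)
  refine ⟨(d j)^[n - 1] y, iterate_mem_orbitOf hy j _, ?_⟩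
  rw [← iterate_succ_apply' (d j), Nat.succ_eq_add_one, Nat.sub_add_cancel hn]
  exact hny

theorem mem_orbitOf_apply (hper : ∀ i (z : S), z ∈ periodicPts (d i)) (x : S) (i : Γ) :
    x ∈ orbitOf d (d i x) := by
  obtain ⟨n, hn, hnx⟩ := mem_periodicPts.1 (hper i x)
  have h := iterate_mem_orbitOf (mem_orbitOf_self (d := d) (d i x)) i (n - 1)
  rwa [← iterate_succ_apply, Nat.succ_eq_add_one, Nat.sub_add_cancel hn, hnx.eq] at h

theorem mem_orbitOf_symm (hper : ∀ i (z : S), z ∈ periodicPts (d i))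
    (hy : y ∈ orbitOf d x) : x ∈ orbitOf d y := by
  obtain ⟨s, rfl⟩ := hy
  induction s generalizing x with
  | nil => exact mem_orbitOf_self x
  | cons i s ih => exact mem_orbitOf_trans ih (mem_orbitOf_apply hper x i)

theorem orbitOf_eq_of_mem (hper : ∀ i (z : S), z ∈ periodicPts (d i))
    (hy : y ∈ orbitOf d x) : orbitOf d y = orbitOf d x :=
  Subset.antisymm (fun _ hz => mem_orbitOf_trans hy hz)
    (fun _ hz => mem_orbitOf_trans (mem_orbitOf_symm hper hy) hz)

end Orbit

section Mealy

variable {Q Γ : Type*} {δ : Γ → Q → Q} {ρ : Q → Γ → Γ}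

theorem length_deltaStar (i : Γ) (w : List Q) : (deltaStar δ ρ i w).length = w.length := by
  induction w generalizing i with
  | nil => rfl
  | cons x u ih => simp [deltaStar, ih]

theorem length_eq_of_mem_orbitOf_deltaStar {v w : List Q} (hv : v ∈ orbitOf (deltaStar δ ρ) w) :
    v.length = w.length := by
  obtain ⟨s, rfl⟩ := hv
  induction s generalizing w with
  | nil => rfl
  | cons i s ih => exact ih.trans (length_deltaStar i w)

theorem finite_orbitOf_deltaStar [Finite Q] (w : List Q) :
    (orbitOf (deltaStar δ ρ) w).Finite :=
  (List.finite_length_eq Q w.length).subset fun _ hv => length_eq_of_mem_orbitOf_deltaStar hv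

theorem deltaStar_injective (hRev : MReversible δ) (i : Γ) :
    Injective (deltaStar δ ρ i) := by
  intro w w' h
  induction w generalizing i w' with
  | nil => cases w' <;> simp_all [deltaStar]
  | cons x u ih =>
    cases w' with
    | nil => simp [deltaStar] at h
    | cons y v =>
      simp only [deltaStar, List.cons.injEq] at h
      obtain rfl := (hRev i).1 h.1
      rw [ih _ h.2]

theorem mem_periodicPts_deltaStar [Finite Q] (hRev : MReversible δ) (i : Γ) (w : List Q) :
    w ∈ periodicPts (deltaStar δ ρ i) := by
  set s := {v : List Q | v.length = w.length}
  have hs : MapsTo (deltaStar δ ρ i) s s := fun v hv => (length_deltaStar i v).trans hv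
  have : Finite s := (List.finite_length_eq Q w.length).to_subtype
  obtain ⟨n, hn, hper⟩ := mem_periodicPts.1
    ((hs.restrict_inj.2 ((deltaStar_injective hRev i).injOn)).mem_periodicPts ⟨w, rfl⟩)
  exact mk_mem_periodicPts hn (hper.map (g := Subtype.val) fun _ => rfl)

theorem applyWord_deltaStar_cons (s : List Γ) (x : Q) (u : List Q) :
    applyWord (deltaStar δ ρ) s (x :: u)
      = applyWord δ s x :: applyWord (deltaStar δ ρ) (rhoStar δ ρ x s) u := by
  induction s generalizing x u with
  | nil => rfl
  | cons i s ih => exact ih _ _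

theorem rhoStar_surjective (hInv : MInvertible ρ) (x : Q) :
    Surjective (rhoStar δ ρ x) := by
  intro s
  induction s generalizing x with
  | nil => exact ⟨[], rfl⟩
  | cons j s ih =>
    obtain ⟨i, rfl⟩ := (hInv x).2 j
    obtain ⟨s', hs'⟩ := ih (δ i x)
    exact ⟨i :: s', by rw [rhoStar, hs']⟩

theorem tail_mem_orbitOf_cons {v u : List Q} {x : Q}
    (hv : v ∈ orbitOf (deltaStar δ ρ) (x :: u)) : v.tail ∈ orbitOf (deltaStar δ ρ) u := by
  obtain ⟨s, rfl⟩ := hv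
  rw [applyWord_deltaStar_cons]
  exact ⟨_, rfl⟩

theorem exists_cons_mem_orbitOf_cons (hInv : MInvertible ρ) {t u : List Q}
    (ht : t ∈ orbitOf (deltaStar δ ρ) u) (x : Q) :
    ∃ b, b :: t ∈ orbitOf (deltaStar δ ρ) (x :: u) := by
  obtain ⟨s, rfl⟩ := ht
  obtain ⟨s', rfl⟩ := rhoStar_surjective (δ := δ) hInv x s
  exact ⟨applyWord δ s' x, s', applyWord_deltaStar_cons s' x u⟩

theorem image_tail_orbitOf_cons (hInv : MInvertible ρ) (x : Q) (u : List Q) :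
    List.tail '' orbitOf (deltaStar δ ρ) (x :: u) = orbitOf (deltaStar δ ρ) u := by
  refine Subset.antisymm (image_subset_iff.2 fun _ => tail_mem_orbitOf_cons) fun t ht => ?_
  obtain ⟨b, hb⟩ := exists_cons_mem_orbitOf_cons hInv ht x
  exact ⟨b :: t, hb, rfl⟩

/-- The map sending the source `(x, i)` of a transition `x —i|j→ y` to its end `(y, j)`. -/
def transitionEnd (δ : Γ → Q → Q) (ρ : Q → Γ → Γ) (p : Q × Γ) : Q × Γ :=
  (δ p.2 p.1, ρ p.1 p.2)

theorem mCoreversible_of_injective_transitionEnd (h : Injective (transitionEnd δ ρ)) :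
    MCoreversible δ ρ :=
  fun _ _ _ _ hδ hρ => congrArg Prod.fst (@h (_, _) (_, _) (Prod.ext hδ hρ))

theorem surjective_transitionEnd_of_injOn_tail [Finite Q] (hConn : MConnected δ)
    (hInv : MInvertible ρ) (hRev : MReversible δ) {x : Q} {u : List Q}
    (hinj : InjOn List.tail (orbitOf (deltaStar δ ρ) (x :: u))) :
    Surjective (transitionEnd δ ρ) := by
  rintro ⟨w, j⟩
  obtain ⟨s, rfl⟩ := hConn x w
  have hwL : applyWord δ s x :: applyWord (deltaStar δ ρ) (rhoStar δ ρ x s) u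
      ∈ orbitOf (deltaStar δ ρ) (x :: u) := ⟨s, applyWord_deltaStar_cons s x u⟩
  obtain ⟨t, ht, htu⟩ := exists_mem_orbitOf_apply_eq (mem_periodicPts_deltaStar hRev)
    (tail_mem_orbitOf_cons hwL) j
  obtain ⟨b, hbL⟩ := exists_cons_mem_orbitOf_cons hInv ht x
  obtain ⟨i, rfl⟩ := (hInv b).2 j
  have hiL := apply_mem_orbitOf hbL i
  rw [deltaStar, htu] at hiL
  exact ⟨(b, i), Prod.ext (List.cons.inj (hinj hiL hwL rfl)).1 rfl⟩

end Mealy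

theorem no_label_one_on_self_liftable_path_general
    {Q Γ : Type*} [Fintype Q] [Fintype Γ]
    (δ : Γ → Q → Q) (ρ : Q → Γ → Γ)
    (hConn : MConnected δ) (hInv : MInvertible ρ) (hRev : MReversible δ)
    (hNotBir : ¬ MBireversible δ ρ)
    (m : ℕ) (u0 v0 : List Q)
    (hv0 : v0.length = m + 1)
    (hlift : ∀ w ∈ orbitOf (deltaStar δ ρ) v0,
      w.drop 1 ∈ orbitOf (deltaStar δ ρ) u0) :
    (orbitOf (deltaStar δ ρ) u0).ncard < (orbitOf (deltaStar δ ρ) v0).ncard := by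
  obtain ⟨x, u, rfl⟩ := List.exists_cons_of_length_eq_add_one hv0
  have hu : u ∈ orbitOf (deltaStar δ ρ) u0 := by simpa using hlift _ (mem_orbitOf_self _)
  have hL := finite_orbitOf_deltaStar (δ := δ) (ρ := ρ) (x :: u)
  rw [← orbitOf_eq_of_mem (mem_periodicPts_deltaStar hRev) hu, ← image_tail_orbitOf_cons hInv]
  refine (ncard_image_le hL).lt_of_ne fun h => hNotBir ⟨hInv, hRev, ?_⟩
  refine mCoreversible_of_injective_transitionEnd (Finite.injective_iff_surjective.2 ?_)
  exact surjective_transitionEnd_of_injOn_tail hConn hInv hRev (injOn_of_ncard_image_eq h hL)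

/-- In a connected invertible reversible non-bireversible
Mealy automaton, along a 1-self-liftable edge of the orbit tree the component
strictly grows: if `T` is the component of a word `u0` of length `m ≥ 1`,
`L` is the component of a word `v0` of length `m + 1`, and every word of `L`
has its length-`m` suffix in `T`, then `|T| < |L|`. -/
theorem no_label_one_on_self_liftable_path
    {Q Γ : Type*} [Fintype Q] [Fintype Γ] [Nonempty Q] [Nonempty Γ]
    (δ : Γ → Q → Q) (ρ : Q → Γ → Γ)
    (hConn : MConnected δ) (hInv : MInvertible ρ) (hRev : MReversible δ)
    (hNotBir : ¬ MBireversible δ ρ)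
    (m : ℕ) (hm : 1 ≤ m) (u0 v0 : List Q)
    (hu0 : u0.length = m) (hv0 : v0.length = m + 1)
    (hlift : ∀ w ∈ orbitOf (deltaStar δ ρ) v0,
      w.drop 1 ∈ orbitOf (deltaStar δ ρ) u0) :
    (orbitOf (deltaStar δ ρ) u0).ncard < (orbitOf (deltaStar δ ρ) v0).ncard :=
  no_label_one_on_self_liftable_path_general δ ρ hConn hInv hRev hNotBir m u0 v0 hv0 hlift
end

section
/- Let A = (Q, Σ, δ, ρ) be a reversible Mealy automaton with |Q| ≥ 2 whose dual acts spherically transitively, i.e., every power A^n is connected (for all n ≥ 1 and all u, v ∈ Qⁿ there exists s ∈ Σ* with δ_s(u) = v). Then the semigroup ⟨A⟩⁺ generated by A is torsion-free; in fact for every nonempty word u ∈ Q⁺ the transformations ρ_u, ρ_u², ρ_u³, … of Σ* are pairwise distinct. -/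
/-!
If `ρ_u^[p] = ρ_u^[q]` for some `p < q`, then some power `w = u^k` has an idempotent output
map: `ρ_w ∘ ρ_w = ρ_w`. Acting by a letter word `s` on the state word `w w w` of the dual gives
`δ_s(w) δ_t(w) δ_{ρ_w(t)}(w)` with `t = ρ_w(s)`, and idempotence makes the last two blocks equal.
So the orbit of `w w w` misses every word of length `3|w|` whose last two blocks differ, and
such words exist as soon as there are two states.
-/

def DualSphericallyTransitive {Q Γ : Type*} (δ : Γ → Q → Q) (ρ : Q → Γ → Γ) : Prop :=
  ∀ n : ℕ, 1 ≤ n → ∀ u v : List Q, u.length = n → v.length = n →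
    ∃ s : List Γ, applyWord (deltaStar δ ρ) s u = v

section Iterate

variable {α : Type*} {f : α → α}

theorem iterate_add_mul_eq_of_iterate_add_eq {m d : ℕ} (h : f^[m + d] = f^[m]) {k : ℕ}
    (hk : m ≤ k) (j : ℕ) : f^[k + j * d] = f^[k] := by
  induction j with
  | zero => simp
  | succ j ih =>
    calc f^[k + (j + 1) * d] = f^[k - m + j * d] ∘ f^[m + d] := by
          rw [← Function.iterate_add]; congr 1; rw [add_mul]; omega
      _ = f^[k + j * d] := by
          rw [h, ← Function.iterate_add]; congr 1; omega
      _ = f^[k] := ih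

theorem exists_iterate_two_mul_eq_of_iterate_eq {m n : ℕ} (hmn : m < n) (h : f^[m] = f^[n]) :
    ∃ k, 0 < k ∧ f^[2 * k] = f^[k] := by
  -- a multiple of the period `n - m` beyond the preperiod `m`
  refine ⟨(m + 1) * (n - m), Nat.mul_pos m.succ_pos (by omega), ?_⟩
  rw [two_mul]
  exact iterate_add_mul_eq_of_iterate_add_eq (m := m) (by rw [Nat.add_sub_cancel' hmn.le, h])
    ((Nat.le_succ m).trans (Nat.le_mul_of_pos_right _ (by omega))) (m + 1)

end Iterate

section Mealy

variable {Q Γ : Type*} (δ : Γ → Q → Q) (ρ : Q → Γ → Γ)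

theorem rhoWord_append (a b : List Q) :
    rhoWord δ ρ (a ++ b) = rhoWord δ ρ b ∘ rhoWord δ ρ a := by
  induction a with
  | nil => rfl
  | cons x a ih => funext s; exact congrFun ih (rhoStar δ ρ x s)

theorem rhoWord_wordPow (u : List Q) (k : ℕ) :
    rhoWord δ ρ (wordPow u k) = (rhoWord δ ρ u)^[k] := by
  induction k with
  | zero => funext s; rfl
  | succ k ih => rw [wordPow, rhoWord_append, ih, Function.iterate_succ]

theorem rhoWord_nil (z : List Q) : rhoWord δ ρ z ([] : List Γ) = [] := by
  induction z with
  | nil => rfl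
  | cons x z ih => exact ih

theorem rhoWord_cons (z : List Q) (i : Γ) (s : List Γ) :
    rhoWord δ ρ z (i :: s) = rhoLetter ρ z i :: rhoWord δ ρ (deltaStar δ ρ i z) s := by
  induction z generalizing i s with
  | nil => rfl
  | cons x z ih => exact ih (ρ x i) (rhoStar δ ρ (δ i x) s)

theorem deltaStar_length (i : Γ) (z : List Q) : (deltaStar δ ρ i z).length = z.length := by
  induction z generalizing i with
  | nil => rfl
  | cons x z ih => simp [deltaStar, ih]

theorem applyWord_deltaStar_length (s : List Γ) (z : List Q) :
    (applyWord (deltaStar δ ρ) s z).length = z.length := by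
  induction s generalizing z with
  | nil => rfl
  | cons i s ih => rw [applyWord, ih, deltaStar_length]

theorem deltaStar_append (i : Γ) (a b : List Q) :
    deltaStar δ ρ i (a ++ b) = deltaStar δ ρ i a ++ deltaStar δ ρ (rhoLetter ρ a i) b := by
  induction a generalizing i with
  | nil => rfl
  | cons x a ih => simp only [List.cons_append, deltaStar, rhoLetter, ih]

theorem applyWord_deltaStar_append (s : List Γ) (a b : List Q) :
    applyWord (deltaStar δ ρ) s (a ++ b) =
      applyWord (deltaStar δ ρ) s a ++ applyWord (deltaStar δ ρ) (rhoWord δ ρ a s) b := by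
  induction s generalizing a b with
  | nil => rw [rhoWord_nil]; rfl
  | cons i s ih => rw [applyWord, deltaStar_append, ih, rhoWord_cons]; rfl

theorem applyWord_deltaStar_append_append_of_idempotent {w : List Q}
    (hw : rhoWord δ ρ w ∘ rhoWord δ ρ w = rhoWord δ ρ w) (s : List Γ) :
    applyWord (deltaStar δ ρ) s (w ++ (w ++ w)) =
      applyWord (deltaStar δ ρ) s w ++
        (applyWord (deltaStar δ ρ) (rhoWord δ ρ w s) w ++
          applyWord (deltaStar δ ρ) (rhoWord δ ρ w s) w) := by
  rw [applyWord_deltaStar_append, applyWord_deltaStar_append,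
    ← Function.comp_apply (f := rhoWord δ ρ w), hw]

theorem not_dualSphericallyTransitive_of_idempotent [Nontrivial Q] {w : List Q} (hw : w ≠ [])
    (hidem : rhoWord δ ρ w ∘ rhoWord δ ρ w = rhoWord δ ρ w) :
    ¬ DualSphericallyTransitive δ ρ := by
  intro hsph
  obtain ⟨x, y, hxy⟩ := exists_pair_ne Q
  have hN : w.length ≠ 0 := by simpa using hw
  set A := List.replicate w.length x
  set B := List.replicate w.length y
  obtain ⟨s, hs⟩ := hsph (3 * w.length) (by omega) (w ++ (w ++ w)) (A ++ (A ++ B))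
    (by simp only [List.length_append]; omega)
    (by simp only [List.length_append, List.length_replicate, A, B]; omega)
  rw [applyWord_deltaStar_append_append_of_idempotent δ ρ hidem] at hs
  obtain ⟨-, hs⟩ := List.append_inj hs (by simp [A, applyWord_deltaStar_length])
  obtain ⟨hA, hB⟩ := List.append_inj hs (by simp [A, applyWord_deltaStar_length])
  exact hxy ((List.replicate_right_inj hN).mp (hA.symm.trans hB))

theorem wordPow_ne_nil {u : List Q} (hu : u ≠ []) {k : ℕ} (hk : 0 < k) :
    wordPow u k ≠ [] := by
  obtain ⟨j, rfl⟩ := Nat.exists_eq_add_of_lt hk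
  simp [wordPow, hu]

theorem rhoWord_iterate_ne_of_lt [Nontrivial Q] (hsph : DualSphericallyTransitive δ ρ)
    {u : List Q} (hu : u ≠ []) {m n : ℕ} (hmn : m < n) :
    (rhoWord δ ρ u)^[m] ≠ (rhoWord δ ρ u)^[n] := by
  intro h
  obtain ⟨k, hk, hidem⟩ := exists_iterate_two_mul_eq_of_iterate_eq hmn h
  refine not_dualSphericallyTransitive_of_idempotent δ ρ (wordPow_ne_nil hu hk) ?_ hsph
  rw [rhoWord_wordPow, ← Function.iterate_add, ← two_mul, hidem]

end Mealy

theorem torsionFree_of_spherically_transitive_dual_general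
    {Q Γ : Type*} [Fintype Q]
    (δ : Γ → Q → Q) (ρ : Q → Γ → Γ)
    (hcard : 2 ≤ Fintype.card Q)
    (hsph : ∀ n : ℕ, 1 ≤ n → ∀ u v : List Q, u.length = n → v.length = n →
      ∃ s : List Γ, applyWord (deltaStar δ ρ) s u = v) :
    ∀ u : List Q, u ≠ [] → ∀ p q : ℕ,
      (rhoWord δ ρ u)^[p + 1] = (rhoWord δ ρ u)^[q + 1] → p = q := by
  have : Nontrivial Q := Fintype.one_lt_card_iff_nontrivial.mp hcard
  intro u hu p q hpq
  rcases lt_trichotomy p q with hlt | heq | hgt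
  · exact absurd hpq (rhoWord_iterate_ne_of_lt δ ρ hsph hu (by omega))
  · exact heq
  · exact absurd hpq.symm (rhoWord_iterate_ne_of_lt δ ρ hsph hu (by omega))

/-- A reversible Mealy automaton with at least two states
whose dual acts spherically transitively (all powers are connected)
generates a torsion-free semigroup: for every nonempty word `u` of states,
the positive powers of `ρ_u` are pairwise distinct. -/
theorem torsionFree_of_spherically_transitive_dual
    {Q Γ : Type*} [Fintype Q] [Fintype Γ] [Nonempty Q] [Nonempty Γ]
    (δ : Γ → Q → Q) (ρ : Q → Γ → Γ)
    (hRev : MReversible δ) (hcard : 2 ≤ Fintype.card Q)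
    (hsph : ∀ n : ℕ, 1 ≤ n → ∀ u v : List Q, u.length = n → v.length = n →
      ∃ s : List Γ, applyWord (deltaStar δ ρ) s u = v) :
    ∀ u : List Q, u ≠ [] → ∀ p q : ℕ,
      (rhoWord δ ρ u)^[p + 1] = (rhoWord δ ρ u)^[q + 1] → p = q :=
  torsionFree_of_spherically_transitive_dual_general δ ρ hcard hsph
end
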